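/- arXiv:1608.04816 — 3 statements merged into one kernel-verified Lean document; each statement's English description precedes it below -/
import Mathlib

section
/- Let m ≥ 1 and let f be a quadratic form on ℚ^{m+1} with negative inertia index 1, with associated symmetric bilinear form B. Let w ∈ ℚ^{m+1} with w ≠ 0 and f(w) = 0, and let v ∈ ℚ^{m+1} with B(v,w) ≠ 0. Then the restriction of f to the orthogonal complement V^⊥ of V = span_ℚ{v,w} is positive definite: for every x ∈ ℚ^{m+1} with B(x,v) = 0, B(x,w) = 0 and x ≠ 0, one has f(x) > 0. -/
/-- A quadratic form `f` on a `ℚ`-vector space has *negative inertia index 1* (with `n` positive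
diagonal entries) if it is equivalent over `ℚ` to a diagonal form
`k₁x₁² + ⋯ + kₙxₙ² + k_{n+1}x_{n+1}²` with `k₁, …, kₙ > 0` and `k_{n+1} < 0`. -/
def NegInertiaIndexOne {M : Type*} [AddCommGroup M] [Module ℚ M] (n : ℕ)
    (f : QuadraticForm ℚ M) : Prop :=
  ∃ k : Fin (n + 1) → ℚ, (∀ i : Fin (n + 1), (i : ℕ) < n → 0 < k i) ∧ k (Fin.last n) < 0 ∧
    QuadraticMap.Equivalent f (QuadraticMap.weightedSumSquares ℚ k)

/-- The symmetric bilinear form associated to a quadratic form: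
`B(x,y) = (f(x+y) − f(x) − f(y))/2`. -/
def assocBilinForm {M : Type*} [AddCommGroup M] [Module ℚ M]
    (f : QuadraticForm ℚ M) (x y : M) : ℚ :=
  (f (x + y) - f x - f y) / 2

/-- Let `f` be a quadratic form on `ℚ^{m+1}` of negative inertia index `1`, `w ≠ 0` isotropic,
and `v` with `B(v,w) ≠ 0`. Then `f` is positive definite on the orthogonal complement of
`span {v, w}`. -/
theorem posDef_on_orthogonal_complement_of_isotropic (m : ℕ) (hm : 1 ≤ m)
    (f : QuadraticForm ℚ (Fin (m + 1) → ℚ)) (hf : NegInertiaIndexOne m f)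
    (w : Fin (m + 1) → ℚ) (hw : w ≠ 0) (hfw : f w = 0)
    (v : Fin (m + 1) → ℚ) (hvw : assocBilinForm f v w ≠ 0) :
    ∀ x : Fin (m + 1) → ℚ, assocBilinForm f x v = 0 → assocBilinForm f x w = 0 → x ≠ 0 →
      0 < f x := by
  obtain ⟨k, hkpos, hklast, ⟨e⟩⟩ := hf
  set g := QuadraticMap.weightedSumSquares ℚ k with hg
  -- the diagonal sum
  set S : (Fin (m + 1) → ℚ) → (Fin (m + 1) → ℚ) → ℚ :=
    fun a b => ∑ i, k i * (a i * b i) with hS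
  have hgS : ∀ a, g a = S a a := by
    intro a
    simp [hg, hS, QuadraticMap.weightedSumSquares_apply, smul_eq_mul]
  have hfe : ∀ a, f a = S (e a) (e a) := by
    intro a
    rw [← e.map_app a, hgS]
  have hBS : ∀ a b, assocBilinForm f a b = S (e a) (e b) := by
    intro a b
    have h1 : e.toLinearEquiv (a + b) = e.toLinearEquiv a + e.toLinearEquiv b := map_add _ a b
    have h2 : (e : (Fin (m+1) → ℚ) → (Fin (m+1) → ℚ)) (a + b) = e a + e b := h1
    rw [assocBilinForm, hfe, hfe, hfe, h2, hS]
    simp only [Pi.add_apply]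
    rw [← Finset.sum_sub_distrib, ← Finset.sum_sub_distrib, Finset.sum_div]
    exact Finset.sum_congr rfl fun i _ => by ring
  -- positivity lemma
  have key : ∀ c : Fin (m + 1) → ℚ, c (Fin.last m) = 0 → S c c ≤ 0 → c = 0 := by
    intro c hcl hcle
    have hsum : S c c = ∑ i : Fin m, k i.castSucc * (c i.castSucc * c i.castSucc) := by
      simp only [hS]
      rw [Fin.sum_univ_castSucc]
      simp [hcl]
    have hnonneg : ∀ i : Fin m, 0 ≤ k i.castSucc * (c i.castSucc * c i.castSucc) := by
      intro i
      have hk := hkpos i.castSucc (by simpa using i.isLt)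
      exact mul_nonneg (le_of_lt hk) (mul_self_nonneg _)
    have hzero : ∀ i ∈ (Finset.univ : Finset (Fin m)), k i.castSucc * (c i.castSucc * c i.castSucc) = 0 := by
      have hle : ∑ i : Fin m, k i.castSucc * (c i.castSucc * c i.castSucc) ≤ 0 := by
        rw [← hsum]; exact hcle
      have hge : 0 ≤ ∑ i : Fin m, k i.castSucc * (c i.castSucc * c i.castSucc) :=
        Finset.sum_nonneg fun i _ => hnonneg i
      have heq : ∑ i : Fin m, k i.castSucc * (c i.castSucc * c i.castSucc) = 0 :=
        le_antisymm hle hge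
      exact (Finset.sum_eq_zero_iff_of_nonneg fun i _ => hnonneg i).mp heq
    funext i
    refine Fin.lastCases ?_ ?_ i
    · exact hcl
    · intro j
      have h := hzero j (Finset.mem_univ j)
      have hk := hkpos j.castSucc (by simpa using j.isLt)
      have : c j.castSucc * c j.castSucc = 0 := by
        rcases mul_eq_zero.mp h with h' | h'
        · exact absurd h' (ne_of_gt hk)
        · exact h'
      simpa using mul_self_eq_zero.mp this
  intro x hxv hxw hx
  by_contra hcon
  push_neg at hcon
  set u := e w with hu
  set y := e x with hy
  set z := e v with hz
  -- u ≠ 0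
  have hune : u ≠ 0 := fun h => hw (by simpa using e.toLinearEquiv.map_eq_zero_iff.mp h)
  have hyne : y ≠ 0 := fun h => hx (by simpa using e.toLinearEquiv.map_eq_zero_iff.mp h)
  have hSuu : S u u = 0 := by rw [← hfe w]; exact hfw
  have hul : u (Fin.last m) ≠ 0 := by
    intro h
    exact hune (key u h (le_of_eq hSuu))
  set s := y (Fin.last m) / u (Fin.last m) with hs'
  set p : Fin (m + 1) → ℚ := y - s • u with hp
  have hpl : p (Fin.last m) = 0 := by
    simp [hp, hs', Pi.sub_apply, Pi.smul_apply, smul_eq_mul]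
    field_simp
    ring
  have hSyu : S y u = 0 := by rw [← hBS x w]; exact hxw
  have hSpp : S p p = S y y - 2 * s * S y u + s ^ 2 * S u u := by
    simp only [hS, hp, Pi.sub_apply, Pi.smul_apply, smul_eq_mul, Finset.mul_sum,
      ← Finset.sum_sub_distrib, ← Finset.sum_add_distrib]
    exact Finset.sum_congr rfl fun i _ => by ring
  have hSpp' : S p p ≤ 0 := by
    rw [hSpp, hSyu, hSuu]
    have : S y y ≤ 0 := by rw [← hfe x]; exact hcon
    linarith
  have hp0 : p = 0 := key p hpl hSpp'
  have hyu : y = s • u := by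
    have := sub_eq_zero.mp (hp ▸ hp0)
    exact this
  -- now the contradiction with v
  have hSuz : S u z ≠ 0 := by
    intro h
    apply hvw
    rw [hBS v w]
    rw [hS] at h ⊢
    rw [← h]
    exact Finset.sum_congr rfl fun i _ => by ring
  have hSyz : S y z = 0 := by rw [← hBS x v]; exact hxv
  have : s * S u z = 0 := by
    rw [← hSyz, hyu]
    simp only [hS]
    rw [Finset.mul_sum]
    exact Finset.sum_congr rfl fun i _ => by
      simp only [Pi.smul_apply, smul_eq_mul]; ring
  rcases mul_eq_zero.mp this with h | h
  · apply hyne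
    rw [hyu, h, zero_smul]
  · exact hSuz h
end

section
/- Let m ≥ 4 and let f be a quadratic form on ℚ^{m+1} with negative inertia index 1 which represents 0 nontrivially (there exists w ∈ ℚ^{m+1}, w ≠ 0, with f(w) = 0). Then there exists a 4-dimensional ℚ-subspace W ⊆ ℚ^{m+1} such that the restriction of f to W has negative inertia index 1 (i.e., is equivalent over ℚ to a diagonal form with three positive coefficients and one negative coefficient; in particular it is nondegenerate) and f represents 0 nontrivially on W. -/
namespace NegAux
open QuadraticMap Finset

def B {n : ℕ} (k x y : Fin n → ℚ) : ℚ := ∑ i, k i * (x i * y i)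

variable {n : ℕ} (k : Fin n → ℚ)

lemma B_symm (x y : Fin n → ℚ) : B k x y = B k y x := by
  unfold B; congr 1; ext i; ring

lemma B_add_left (x x' y : Fin n → ℚ) : B k (x + x') y = B k x y + B k x' y := by
  unfold B; rw [← Finset.sum_add_distrib]; congr 1; ext i; simp [Pi.add_apply]; ring

lemma B_add_right (x y y' : Fin n → ℚ) : B k x (y + y') = B k x y + B k x y' := by
  rw [B_symm, B_add_left, B_symm k y x, B_symm k y' x]

lemma B_smul_left (c : ℚ) (x y : Fin n → ℚ) : B k (c • x) y = c * B k x y := by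
  unfold B; rw [Finset.mul_sum]; congr 1; ext i; simp [Pi.smul_apply, smul_eq_mul]; ring

lemma B_smul_right (c : ℚ) (x y : Fin n → ℚ) : B k x (c • y) = c * B k x y := by
  rw [B_symm, B_smul_left, B_symm]

lemma B_sub_left (x x' y : Fin n → ℚ) : B k (x - x') y = B k x y - B k x' y := by
  unfold B; rw [← Finset.sum_sub_distrib]; congr 1; ext i; simp [Pi.sub_apply]; ring

lemma B_sub_right (x y y' : Fin n → ℚ) : B k x (y - y') = B k x y - B k x y' := by
  rw [B_symm, B_sub_left, B_symm k y x, B_symm k y' x]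

lemma B_single_right (x : Fin n → ℚ) (a : Fin n) (c : ℚ) :
    B k x (Pi.single a c) = k a * x a * c := by
  unfold B
  rw [Finset.sum_eq_single a]
  · rw [Pi.single_eq_same]; ring
  · intro i _ hia; rw [Pi.single_eq_of_ne hia, mul_zero, mul_zero]
  · intro h; exact absurd (Finset.mem_univ a) h

lemma B_single_left (x : Fin n → ℚ) (a : Fin n) (c : ℚ) :
    B k (Pi.single a c) x = k a * x a * c := by
  rw [B_symm, B_single_right]

lemma ws_eq (x : Fin n → ℚ) : weightedSumSquares ℚ k x = B k x x := by
  simp [weightedSumSquares_apply, B, smul_eq_mul]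

lemma polar_zero_of_B (x y : Fin n → ℚ) (h : B k x y = 0) :
    weightedSumSquares ℚ k (x + y) - weightedSumSquares ℚ k x - weightedSumSquares ℚ k y = 0 := by
  rw [ws_eq, ws_eq, ws_eq, B_add_left, B_add_right, B_add_right, B_symm k y x, h]; ring

lemma assoc_zero {M : Type*} [AddCommGroup M] [Module ℚ M] (Q : QuadraticForm ℚ M) (x y : M)
    (h : Q (x + y) - Q x - Q y = 0) : QuadraticMap.associated (R := ℚ) Q x y = 0 := by
  have h2 : QuadraticMap.associated (R := ℚ) Q x y
      = ⅟ (2 : Module.End ℚ ℚ) • (Q (x + y) - Q x - Q y) := QuadraticMap.associated_apply ℚ Q x y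
  rw [h2, h, smul_zero]

lemma assoc_zero_of_B (x y : Fin n → ℚ) (h : B k x y = 0) :
    QuadraticMap.associated (R := ℚ) (weightedSumSquares ℚ k) x y = 0 :=
  assoc_zero _ _ _ (polar_zero_of_B k x y h)

lemma B_pos {m : ℕ} (k : Fin (m+1) → ℚ) (hk : ∀ i : Fin (m+1), (i : ℕ) < m → 0 < k i)
    (x : Fin (m+1) → ℚ) (hxL : x (Fin.last m) = 0) (hx : x ≠ 0) : 0 < B k x x := by
  unfold B
  rw [Fin.sum_univ_castSucc, hxL, mul_zero, mul_zero, add_zero]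
  obtain ⟨i, hi⟩ := Function.ne_iff.1 hx
  have hiL : i ≠ Fin.last m := fun h => hi (h ▸ hxL)
  obtain ⟨i', rfl⟩ := Fin.exists_castSucc_eq.2 hiL
  refine Finset.sum_pos' (fun j _ => mul_nonneg (hk _ (by simp)).le (mul_self_nonneg _))
    ⟨i', Finset.mem_univ _, mul_pos (hk _ (by simp)) (mul_self_pos.2 hi)⟩

end NegAux

open NegAux QuadraticMap

/-- If `f` is a quadratic form on `ℚ^{m+1}`, `m ≥ 4`, of negative inertia index `1` which
represents `0` nontrivially, then there is a `4`-dimensional subspace `W ⊆ ℚ^{m+1}` on which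
the restriction of `f` has negative inertia index `1` and represents `0` nontrivially. -/
theorem exists_four_dim_subspace_negInertiaOne_isotropic (m : ℕ) (hm : 4 ≤ m)
    (f : QuadraticForm ℚ (Fin (m + 1) → ℚ)) (hf : NegInertiaIndexOne m f)
    (w : Fin (m + 1) → ℚ) (hw : w ≠ 0) (hfw : f w = 0) :
    ∃ W : Submodule ℚ (Fin (m + 1) → ℚ),
      Module.finrank ℚ W = 4 ∧
      NegInertiaIndexOne 3 (f.comp W.subtype) ∧
      ∃ x : W, x ≠ 0 ∧ (f.comp W.subtype) x = 0 := by
  classical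
  obtain ⟨k, hkpos, hkneg, ⟨φ0⟩⟩ := hf
  set L : Fin (m + 1) := Fin.last m with hLdef
  set v : Fin (m + 1) → ℚ := φ0 w with hvdef
  set ψl : (Fin (m + 1) → ℚ) ≃ₗ[ℚ] (Fin (m + 1) → ℚ) := φ0.toLinearEquiv.symm with hψdef
  have hψf : ∀ z, f (ψl z) = weightedSumSquares ℚ k z := fun z => (φ0.symm).map_app z
  have hψw : ψl v = w := φ0.toLinearEquiv.symm_apply_apply w
  have hqv : weightedSumSquares ℚ k v = 0 := by
    rw [← hfw]; exact φ0.map_app w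
  have hv0 : v ≠ 0 := by
    intro h
    apply hw
    rw [← hψw, h, map_zero]
  have hBvv : B k v v = 0 := by rw [← ws_eq]; exact hqv
  have hvL : v L ≠ 0 := by
    intro h
    have := B_pos k hkpos v h hv0
    rw [← ws_eq, hqv] at this
    exact lt_irrefl 0 this
  obtain ⟨j, hvJ⟩ : ∃ j : Fin m, v j.castSucc ≠ 0 := by
    by_contra hcon
    push_neg at hcon
    have h1 : weightedSumSquares ℚ k v = k L * (v L * v L) := by
      rw [weightedSumSquares_apply, Fin.sum_univ_castSucc]
      simp [hcon, hLdef]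
    rw [hqv] at h1
    exact (mul_ne_zero hkneg.ne (mul_ne_zero hvL hvL)) h1.symm
  obtain ⟨a, b, hab, haj, hbj⟩ : ∃ a b : Fin m, a ≠ b ∧ a ≠ j ∧ b ≠ j := by
    by_cases h0 : j = ⟨0, by omega⟩
    · exact ⟨⟨1, by omega⟩, ⟨2, by omega⟩, by simp [Fin.ext_iff], by simp [h0, Fin.ext_iff],
        by simp [h0, Fin.ext_iff]⟩
    · by_cases h1 : j = ⟨1, by omega⟩
      · exact ⟨⟨0, by omega⟩, ⟨2, by omega⟩, by simp [Fin.ext_iff], by simp [h1, Fin.ext_iff],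
          by simp [h1, Fin.ext_iff]⟩
      · exact ⟨⟨0, by omega⟩, ⟨1, by omega⟩, by simp [Fin.ext_iff],
          fun h => h0 h.symm, fun h => h1 h.symm⟩
  set J : Fin (m + 1) := j.castSucc with hJdef
  set I1 : Fin (m + 1) := a.castSucc with hI1def
  set I2 : Fin (m + 1) := b.castSucc with hI2def
  have hJL : J ≠ L := (Fin.castSucc_lt_last j).ne
  have hI1L : I1 ≠ L := (Fin.castSucc_lt_last a).ne
  have hI2L : I2 ≠ L := (Fin.castSucc_lt_last b).ne
  have hI1J : I1 ≠ J := fun h => haj (Fin.castSucc_inj.mp h)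
  have hI2J : I2 ≠ J := fun h => hbj (Fin.castSucc_inj.mp h)
  have hI1I2 : I1 ≠ I2 := fun h => hab (Fin.castSucc_inj.mp h)
  -- single evaluations
  have sLI1 : (Pi.single L (1:ℚ) : Fin (m + 1) → ℚ) I1 = 0 := by rw [Pi.single_eq_of_ne hI1L]
  have sLI2 : (Pi.single L (1:ℚ) : Fin (m + 1) → ℚ) I2 = 0 := by rw [Pi.single_eq_of_ne hI2L]
  have sLJ : (Pi.single L (1:ℚ) : Fin (m + 1) → ℚ) J = 0 := by rw [Pi.single_eq_of_ne hJL]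
  have sI1L : (Pi.single I1 (1:ℚ) : Fin (m + 1) → ℚ) L = 0 := by rw [Pi.single_eq_of_ne hI1L.symm]
  have sI2L : (Pi.single I2 (1:ℚ) : Fin (m + 1) → ℚ) L = 0 := by rw [Pi.single_eq_of_ne hI2L.symm]
  have sJL : (Pi.single J (1:ℚ) : Fin (m + 1) → ℚ) L = 0 := by rw [Pi.single_eq_of_ne hJL.symm]
  have sJI1 : (Pi.single J (1:ℚ) : Fin (m + 1) → ℚ) I1 = 0 := by rw [Pi.single_eq_of_ne hI1J]
  have sJI2 : (Pi.single J (1:ℚ) : Fin (m + 1) → ℚ) I2 = 0 := by rw [Pi.single_eq_of_ne hI2J]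
  have sI1J : (Pi.single I1 (1:ℚ) : Fin (m + 1) → ℚ) J = 0 := by rw [Pi.single_eq_of_ne hI1J.symm]
  have sI2J : (Pi.single I2 (1:ℚ) : Fin (m + 1) → ℚ) J = 0 := by rw [Pi.single_eq_of_ne hI2J.symm]
  have sI1I2 : (Pi.single I1 (1:ℚ) : Fin (m + 1) → ℚ) I2 = 0 := by rw [Pi.single_eq_of_ne hI1I2.symm]
  have sI2I1 : (Pi.single I2 (1:ℚ) : Fin (m + 1) → ℚ) I1 = 0 := by rw [Pi.single_eq_of_ne hI1I2]
  -- the vectors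
  set u1 : Fin (m + 1) → ℚ := v + v L • (Pi.single L 1 : Fin (m + 1) → ℚ) with hu1
  set u2 : Fin (m + 1) → ℚ := v - (v L / 2) • (Pi.single L 1 : Fin (m + 1) → ℚ) with hu2
  set p1 : Fin (m + 1) → ℚ :=
    (k J * v J) • (Pi.single I1 1 : Fin (m + 1) → ℚ)
      - (k I1 * v I1) • (Pi.single J 1 : Fin (m + 1) → ℚ) with hp1
  set p2r : Fin (m + 1) → ℚ :=
    (k J * v J) • (Pi.single I2 1 : Fin (m + 1) → ℚ)
      - (k I2 * v I2) • (Pi.single J 1 : Fin (m + 1) → ℚ) with hp2r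
  set p2 : Fin (m + 1) → ℚ := B k p1 p1 • p2r - B k p1 p2r • p1 with hp2
  -- B computations
  have hBu11 : B k u1 u1 = 3 * (k L * (v L * v L)) := by
    simp only [hu1, B_add_left, B_add_right, B_smul_left, B_smul_right, B_single_right,
      B_single_left, Pi.add_apply, Pi.sub_apply, Pi.smul_apply, smul_eq_mul, Pi.single_eq_same, sLI1, sLI2, sLJ, sI1L, sI2L, sJL, sJI1, sJI2, sI1J, sI2J, sI1I2, sI2I1, hBvv]
    ring
  have hBu22 : B k u2 u2 = -(3/4) * (k L * (v L * v L)) := by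
    simp only [hu2, B_sub_left, B_sub_right, B_smul_left, B_smul_right, B_single_right,
      B_single_left, Pi.add_apply, Pi.sub_apply, Pi.smul_apply, smul_eq_mul, Pi.single_eq_same, sLI1, sLI2, sLJ, sI1L, sI2L, sJL, sJI1, sJI2, sI1J, sI2J, sI1I2, sI2I1, hBvv]
    ring
  have hBu12 : B k u1 u2 = 0 := by
    simp only [hu1, hu2, B_add_left, B_sub_right, B_smul_left, B_smul_right, B_single_right,
      B_single_left, Pi.add_apply, Pi.sub_apply, Pi.smul_apply, smul_eq_mul, Pi.single_eq_same, sLI1, sLI2, sLJ, sI1L, sI2L, sJL, sJI1, sJI2, sI1J, sI2J, sI1I2, sI2I1, hBvv]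
    ring
  have hBvp1 : B k v p1 = 0 := by
    simp only [hp1, B_sub_right, B_smul_right, B_single_right, Pi.add_apply, Pi.sub_apply, Pi.smul_apply, smul_eq_mul, Pi.single_eq_same, sLI1, sLI2, sLJ, sI1L, sI2L, sJL, sJI1, sJI2, sI1J, sI2J, sI1I2, sI2I1, hBvv]; ring
  have hBvp2r : B k v p2r = 0 := by
    simp only [hp2r, B_sub_right, B_smul_right, B_single_right, Pi.add_apply, Pi.sub_apply, Pi.smul_apply, smul_eq_mul, Pi.single_eq_same, sLI1, sLI2, sLJ, sI1L, sI2L, sJL, sJI1, sJI2, sI1J, sI2J, sI1I2, sI2I1, hBvv]; ring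
  have hBep1 : B k (Pi.single L 1 : Fin (m + 1) → ℚ) p1 = 0 := by
    simp only [hp1, B_sub_right, B_smul_right, B_single_right, Pi.add_apply, Pi.sub_apply, Pi.smul_apply, smul_eq_mul, Pi.single_eq_same, sLI1, sLI2, sLJ, sI1L, sI2L, sJL, sJI1, sJI2, sI1J, sI2J, sI1I2, sI2I1, hBvv]; ring
  have hBep2r : B k (Pi.single L 1 : Fin (m + 1) → ℚ) p2r = 0 := by
    simp only [hp2r, B_sub_right, B_smul_right, B_single_right, Pi.add_apply, Pi.sub_apply, Pi.smul_apply, smul_eq_mul, Pi.single_eq_same, sLI1, sLI2, sLJ, sI1L, sI2L, sJL, sJI1, sJI2, sI1J, sI2J, sI1I2, sI2I1, hBvv]; ring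
  have hBvp2 : B k v p2 = 0 := by
    simp only [hp2, B_sub_right, B_smul_right, hBvp1, hBvp2r]; ring
  have hBep2 : B k (Pi.single L 1 : Fin (m + 1) → ℚ) p2 = 0 := by
    simp only [hp2, B_sub_right, B_smul_right, hBep1, hBep2r]; ring
  have hBp1p2 : B k p1 p2 = 0 := by
    simp only [hp2, B_sub_right, B_smul_right]; ring
  have hBu1p1 : B k u1 p1 = 0 := by
    simp only [hu1, B_add_left, B_smul_left, hBvp1, hBep1]; ring
  have hBu1p2 : B k u1 p2 = 0 := by
    simp only [hu1, B_add_left, B_smul_left, hBvp2, hBep2]; ring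
  have hBu2p1 : B k u2 p1 = 0 := by
    simp only [hu2, B_sub_left, B_smul_left, hBvp1, hBep1]; ring
  have hBu2p2 : B k u2 p2 = 0 := by
    simp only [hu2, B_sub_left, B_smul_left, hBvp2, hBep2]; ring
  -- coordinates
  have hp1L : p1 L = 0 := by
    simp only [hp1, Pi.sub_apply, Pi.smul_apply, smul_eq_mul, sI1L, sJL]; ring
  have hp1I1 : p1 I1 = k J * v J := by
    simp only [hp1, Pi.sub_apply, Pi.smul_apply, smul_eq_mul, Pi.single_eq_same, sJI1]; ring
  have hp1I2 : p1 I2 = 0 := by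
    simp only [hp1, Pi.sub_apply, Pi.smul_apply, smul_eq_mul, sI1I2, sJI2]; ring
  have hp2rL : p2r L = 0 := by
    simp only [hp2r, Pi.sub_apply, Pi.smul_apply, smul_eq_mul, sI2L, sJL]; ring
  have hp2rI2 : p2r I2 = k J * v J := by
    simp only [hp2r, Pi.sub_apply, Pi.smul_apply, smul_eq_mul, Pi.single_eq_same, sJI2]; ring
  have hp2L : p2 L = 0 := by
    simp only [hp2, Pi.sub_apply, Pi.smul_apply, smul_eq_mul, hp1L, hp2rL]; ring
  have hp2I2 : p2 I2 = B k p1 p1 * (k J * v J) := by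
    simp only [hp2, Pi.sub_apply, Pi.smul_apply, smul_eq_mul, hp2rI2, hp1I2]; ring
  -- positivity
  have hkJ : 0 < k J := hkpos J (by simpa [hJdef] using j.isLt)
  have hkJvJ : k J * v J ≠ 0 := mul_ne_zero hkJ.ne' hvJ
  have hp1ne : p1 ≠ 0 := by
    intro h
    apply hkJvJ
    rw [← hp1I1, h]; rfl
  have hqp1 : 0 < B k p1 p1 := B_pos k hkpos p1 hp1L hp1ne
  have hp2ne : p2 ≠ 0 := by
    intro h
    apply mul_ne_zero hqp1.ne' hkJvJ
    rw [← hp2I2, h]; rfl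
  have hqp2 : 0 < B k p2 p2 := B_pos k hkpos p2 hp2L hp2ne
  have hvLL : 0 < v L * v L := mul_self_pos.2 hvL
  have hX : k L * (v L * v L) < 0 := mul_neg_of_neg_of_pos hkneg hvLL
  have hqu1 : B k u1 u1 < 0 := by rw [hBu11]; linarith
  have hqu2 : 0 < B k u2 u2 := by rw [hBu22]; linarith
  -- the family
  set c : Fin 4 → (Fin (m + 1) → ℚ) := ![u2, p1, p2, u1] with hcdef
  have hc0 : c 0 = u2 := rfl
  have hc1 : c 1 = p1 := rfl
  have hc2 : c 2 = p2 := rfl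
  have hc3 : c 3 = u1 := rfl
  have hBu2u1 : B k u2 u1 = 0 := by rw [B_symm]; exact hBu12
  have hBp1u2 : B k p1 u2 = 0 := by rw [B_symm]; exact hBu2p1
  have hBp1u1 : B k p1 u1 = 0 := by rw [B_symm]; exact hBu1p1
  have hBp2u2 : B k p2 u2 = 0 := by rw [B_symm]; exact hBu2p2
  have hBp2p1 : B k p2 p1 = 0 := by rw [B_symm]; exact hBp1p2
  have hBp2u1 : B k p2 u1 = 0 := by rw [B_symm]; exact hBu1p2
  have hBc : ∀ i j' : Fin 4, i ≠ j' → B k (c i) (c j') = 0 := by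
    intro i j' hij
    fin_cases i <;> fin_cases j'
    · exact absurd rfl hij
    · exact hBu2p1
    · exact hBu2p2
    · exact hBu2u1
    · exact hBp1u2
    · exact absurd rfl hij
    · exact hBp1p2
    · exact hBp1u1
    · exact hBp2u2
    · exact hBp2p1
    · exact absurd rfl hij
    · exact hBp2u1
    · exact hBu12
    · exact hBu1p1
    · exact hBu1p2
    · exact absurd rfl hij
  have hBcself : ∀ i : Fin 4, B k (c i) (c i) ≠ 0 := by
    intro i
    fin_cases i
    · exact hqu2.ne'
    · exact hqp1.ne'
    · exact hqp2.ne'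
    · exact hqu1.ne
  -- linear independence
  have hOrtq : (QuadraticMap.associated (R := ℚ) (weightedSumSquares ℚ k)).IsOrthoᵢ c := by
    intro i j' hij
    exact assoc_zero_of_B k _ _ (hBc i j' hij)
  have hindc : LinearIndependent ℚ c := by
    refine LinearMap.linearIndependent_of_isOrthoᵢ hOrtq ?_
    intro i h
    rw [associated_eq_self_apply, ws_eq] at h
    exact hBcself i h
  set y : Fin 4 → (Fin (m + 1) → ℚ) := fun i => ψl (c i) with hydef
  have hindy : LinearIndependent ℚ y := by
    have := hindc.map' ψl.toLinearMap ψl.ker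
    exact this
  set W : Submodule ℚ (Fin (m + 1) → ℚ) := Submodule.span ℚ (Set.range y) with hWdef
  have hrank : Module.finrank ℚ W = 4 := by
    rw [hWdef, finrank_span_eq_card hindy, Fintype.card_fin]
  set bas : Module.Basis (Fin 4) ℚ W := Module.Basis.span hindy with hbasdef
  have hbas : ∀ i, (bas i : Fin (m + 1) → ℚ) = y i := fun i => congrArg Subtype.val (Module.Basis.span_apply hindy i)
  have hfy : ∀ i, f (y i) = B k (c i) (c i) := by
    intro i
    rw [hydef]
    simp only
    rw [hψf, ws_eq]
  have hval : ∀ i, (f.comp W.subtype) (bas i) = B k (c i) (c i) := by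
    intro i
    rw [QuadraticMap.comp_apply]
    have : W.subtype (bas i) = y i := hbas i
    rw [this, hfy]
  have hval0 : (f.comp W.subtype) (bas 0) = B k u2 u2 := by rw [hval 0, hc0]
  have hval1 : (f.comp W.subtype) (bas 1) = B k p1 p1 := by rw [hval 1, hc1]
  have hval2 : (f.comp W.subtype) (bas 2) = B k p2 p2 := by rw [hval 2, hc2]
  have hval3 : (f.comp W.subtype) (bas (Fin.last 3)) = B k u1 u1 := by
    rw [hval (Fin.last 3), show c (Fin.last 3) = u1 from rfl]
  have hOrt' : (QuadraticMap.associated (R := ℚ) (f.comp W.subtype)).IsOrthoᵢ ⇑bas := by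
    intro i j' hij
    apply assoc_zero
    have e1 : (f.comp W.subtype) (bas i + bas j') = weightedSumSquares ℚ k (c i + c j') := by
      rw [QuadraticMap.comp_apply]
      have : W.subtype (bas i + bas j') = ψl (c i + c j') := by
        rw [map_add, map_add]
        have h1 : W.subtype (bas i) = y i := hbas i
        have h2 : W.subtype (bas j') = y j' := hbas j'
        rw [h1, h2]
      rw [this, hψf]
    have e2 : (f.comp W.subtype) (bas i) = weightedSumSquares ℚ k (c i) := by
      rw [hval, ws_eq]
    have e3 : (f.comp W.subtype) (bas j') = weightedSumSquares ℚ k (c j') := by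
      rw [hval, ws_eq]
    rw [e1, e2, e3]
    exact polar_zero_of_B k _ _ (hBc i j' hij)
  have hrepr := (f.comp W.subtype).basisRepr_eq_of_iIsOrtho bas hOrt'
  refine ⟨W, hrank, ⟨fun i => (f.comp W.subtype) (bas i), ?_, ?_, ?_⟩, ?_⟩
  · intro i hi
    fin_cases i
    · exact lt_of_lt_of_eq hqu2 hval0.symm
    · exact lt_of_lt_of_eq hqp1 hval1.symm
    · exact lt_of_lt_of_eq hqp2 hval2.symm
    · exact absurd hi (by decide)
  · exact lt_of_eq_of_lt hval3 hqu1
  · rw [← hrepr]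
    exact ⟨(f.comp W.subtype).isometryEquivBasisRepr bas⟩
  · have hvcomb : v = (2/3 : ℚ) • u2 + (1/3 : ℚ) • u1 := by
      rw [hu1, hu2]
      ext i
      simp only [Pi.add_apply, Pi.sub_apply, Pi.smul_apply, smul_eq_mul]
      ring
    have hwW : w ∈ W := by
      rw [← hψw, hvcomb, map_add, _root_.map_smul, _root_.map_smul]
      refine Submodule.add_mem _ (Submodule.smul_mem _ _ ?_) (Submodule.smul_mem _ _ ?_)
      · exact Submodule.subset_span ⟨0, rfl⟩
      · exact Submodule.subset_span ⟨3, rfl⟩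
    refine ⟨⟨w, hwW⟩, ?_, ?_⟩
    · intro h
      apply hw
      simpa using congrArg Subtype.val h
    · rw [QuadraticMap.comp_apply, Submodule.subtype_apply]
      exact hfw
end

section
/- Let N ≥ 1 and let ε : {0, 1, …, N−1} → ℤ be a sequence with ε(j) ∈ {+1, −1} for all j, ε(0) = +1, and total sum A = ∑_{j<N} ε(j) ≥ 1. Then there exist indices 0 = i₀ < i₁ < ⋯ < i_{A−1} < N such that ε(i_k) = +1 for every k and the partial sum ∑_{j < i_k} ε(j) equals k for every k ∈ {0, 1, …, A−1}. -/
/-- Selection lemma: given a `±1`-sequence `ε` of length `N` starting with `+1` and with total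
sum `A ≥ 1`, one can select indices `0 = i₀ < i₁ < ⋯ < i_{A-1} < N` at which `ε` equals `+1`
and such that the partial sum of `ε` before `i_k` equals `k`. -/
theorem exists_selection_of_sign_sequence (N : ℕ) (hN : 1 ≤ N) (ε : ℕ → ℤ)
    (hε : ∀ j < N, ε j = 1 ∨ ε j = -1) (h0 : ε 0 = 1)
    (A : ℤ) (hA : A = ∑ j ∈ Finset.range N, ε j) (hA1 : 1 ≤ A) :
    ∃ i : Fin A.toNat → ℕ,
      StrictMono i ∧
      (∀ k : Fin A.toNat, i k < N) ∧
      (∀ k : Fin A.toNat, (k : ℕ) = 0 → i k = 0) ∧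
      (∀ k : Fin A.toNat, ε (i k) = 1) ∧
      (∀ k : Fin A.toNat, ∑ j ∈ Finset.range (i k), ε j = ((k : ℕ) : ℤ)) := by
  classical
  set S : ℕ → ℤ := fun i => ∑ j ∈ Finset.range i, ε j with hSdef
  have hstep : ∀ i, S (i + 1) = S i + ε i := fun i => Finset.sum_range_succ ε i
  have hS0 : S 0 = 0 := Finset.sum_range_zero ε
  have hSN : S N = A := hA.symm
  -- discrete intermediate value theorem
  have ivt : ∀ b, b ≤ N → ∀ a k, a ≤ b → S a ≤ k → k ≤ S b →
      ∃ m, a ≤ m ∧ m ≤ b ∧ S m = k := by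
    intro b
    induction b with
    | zero =>
      intro _ a k ha h1 h2
      interval_cases a
      exact ⟨0, le_rfl, le_rfl, le_antisymm h1 h2⟩
    | succ b ih =>
      intro hbN a k ha h1 h2
      by_cases hb : S (b + 1) = k
      · exact ⟨b + 1, ha, le_rfl, hb⟩
      · have hk : k < S (b + 1) := lt_of_le_of_ne h2 (Ne.symm hb)
        have hεb : ε b ≤ 1 := by
          rcases hε b (lt_of_lt_of_le (Nat.lt_succ_self b) hbN) with h | h <;> omega
        have hkb : k ≤ S b := by have := hstep b; omega
        have hab : a ≤ b := by
          by_contra hc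
          have : a = b + 1 := le_antisymm ha (by omega)
          subst this
          omega
        obtain ⟨m, h1', h2', h3'⟩ := ih (by omega) a k hab h1 hkb
        exact ⟨m, h1', Nat.le_trans h2' (Nat.le_succ b), h3'⟩
  -- up-crossing lemma
  have crossing : ∀ b, b ≤ N → ∀ k : ℤ, 0 ≤ k → k < S b →
      ∃ j, j < b ∧ S j = k ∧ ε j = 1 := by
    intro b hbN k hk0 hkb
    obtain ⟨m, _, hm2, hm3⟩ :=
      ivt b hbN 0 k (Nat.zero_le b) (by rw [hS0]; exact hk0) (le_of_lt hkb)
    have hmb : m < b := by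
      rcases lt_or_eq_of_le hm2 with h | h
      · exact h
      · subst h; omega
    have hb0 : 0 < b := Nat.pos_of_ne_zero (by rintro rfl; omega)
    set j := Nat.findGreatest (fun i => S i = k) (b - 1) with hjdef
    have hj : S j = k := Nat.findGreatest_spec (P := fun i => S i = k) (m := m) (n := b - 1) (by omega) hm3
    have hjb : j ≤ b - 1 := Nat.findGreatest_le _
    have hjN : j < N := by omega
    have hjlt : j < b := by omega
    refine ⟨j, hjlt, hj, ?_⟩
    rcases hε j hjN with h | h
    · exact h
    · exfalso
      have hj1 : S (j + 1) = k - 1 := by have := hstep j; omega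
      obtain ⟨m', hm'1, hm'2, hm'3⟩ :=
        ivt b hbN (j + 1) k (by omega) (by omega) (le_of_lt hkb)
      have hm'b : m' < b := by
        rcases lt_or_eq_of_le hm'2 with h' | h'
        · exact h'
        · subst h'; omega
      have hjm' : j < m' := by omega
      exact Nat.findGreatest_is_greatest hjm' (by omega) hm'3
  -- key existence
  have key : ∀ k : ℕ, k < A.toNat → ∃ j, j < N ∧ S j = (k : ℤ) ∧ ε j = 1 := by
    intro k hk
    have hkA : (k : ℤ) < A := by omega
    exact crossing N le_rfl k (by positivity) (by rw [hSN]; exact hkA)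
  let f : ℕ → ℕ := fun k => if h : k < A.toNat then Nat.find (key k h) else 0
  have hf : ∀ k (hk : k < A.toNat), f k < N ∧ S (f k) = (k : ℤ) ∧ ε (f k) = 1 := by
    intro k hk
    simp only [f, dif_pos hk]
    exact Nat.find_spec (key k hk)
  have hmin : ∀ k (hk : k < A.toNat), ∀ j, j < N → S j = (k : ℤ) → ε j = 1 → f k ≤ j := by
    intro k hk j h1 h2 h3
    simp only [f, dif_pos hk]
    exact Nat.find_min' (key k hk) ⟨h1, h2, h3⟩
  refine ⟨fun k => f k, ?_, fun k => (hf k k.isLt).1, ?_, fun k => (hf k k.isLt).2.2,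
    fun k => (hf k k.isLt).2.1⟩
  · intro k k' hkk'
    obtain ⟨hbN, hbS, _⟩ := hf k' k'.isLt
    have hcast : ((k : ℕ) : ℤ) < ((k' : ℕ) : ℤ) := by exact_mod_cast hkk'
    obtain ⟨j, hj1, hj2, hj3⟩ :=
      crossing (f k') (le_of_lt hbN) (k : ℕ) (by positivity) (by omega)
    exact lt_of_le_of_lt (hmin k k.isLt j (by omega) hj2 hj3) hj1
  · intro k hk
    have := hmin k k.isLt 0 hN (by rw [hS0, hk]; simp) h0
    show f (k : ℕ) = 0
    omega
end
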